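/- Let f : ℝ^d → ℝ be L-gradient Lipschitz and satisfy the Polyak–Łojasiewicz condition with parameter μ > 0: ‖∇f(x)‖² ≥ 2μ(f(x) − f*) for all x, where f* = inf f. Suppose x' = x − η v + ξ with ‖ξ‖ ≤ r. Then f(x') − f* ≤ (1 − ημ)(f(x) − f*) + η‖∇f(x) − v‖² − (1/(2η) − L/2)‖x' − x‖² + r²/η. -/

import Mathlib

/-!
The quadratic upper bound `f y ≤ f x + ⟪∇f x, y - x⟫ + L/2 ‖y - x‖²` of an `L`-smooth function,
applied to the step `x' - x = ξ - η v`, is combined with the expansion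
`‖η ∇f x + (x' - x)‖² = ‖η (∇f x - v) + ξ‖² ≤ 2η² ‖∇f x - v‖² + 2r²`, which trades the linear
term for `-η/2 ‖∇f x‖²`; the PL inequality turns the latter into `-ημ (f x - f*)`.
-/

open RealInnerProductSpace Set

section Smooth

variable {E : Type*} [NormedAddCommGroup E] [InnerProductSpace ℝ E] [CompleteSpace E]
  {f : E → ℝ} {L : ℝ}

theorem hasDerivAt_comp_add_smul (hf : Differentiable ℝ f) (x Δ : E) (t : ℝ) :
    HasDerivAt (fun s : ℝ => f (x + s • Δ)) ⟪gradient f (x + t • Δ), Δ⟫ t := by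
  have hline : HasDerivAt (fun s : ℝ => x + s • Δ) Δ t := by
    simpa using ((hasDerivAt_id t).smul_const Δ).const_add x
  have hcomp := (hf _).hasFDerivAt.comp_hasDerivAt t hline
  rwa [(hf _).hasGradientAt.fderiv_apply] at hcomp

theorem le_add_inner_gradient_add_sq (hf : Differentiable ℝ f)
    (hlip : ∀ x y, ‖gradient f x - gradient f y‖ ≤ L * ‖x - y‖) (x y : E) :
    f y ≤ f x + ⟪gradient f x, y - x⟫ + L / 2 * ‖y - x‖ ^ 2 := by
  set Δ := y - x
  -- `φ t = f (x + t Δ) - t ⟪∇f x, Δ⟫ - L t² ‖Δ‖² / 2` is antitone on `[0, ∞)`.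
  set φ : ℝ → ℝ := fun t => f (x + t • Δ) - t * ⟪gradient f x, Δ⟫ - L / 2 * t ^ 2 * ‖Δ‖ ^ 2
  have hφ' : ∀ t,
      HasDerivAt φ (⟪gradient f (x + t • Δ) - gradient f x, Δ⟫ - L * t * ‖Δ‖ ^ 2) t := by
    intro t
    have := ((hasDerivAt_comp_add_smul hf x Δ t).sub
      ((hasDerivAt_id t).mul_const ⟪gradient f x, Δ⟫)).sub
      (((hasDerivAt_pow 2 t).const_mul (L / 2)).mul_const (‖Δ‖ ^ 2))
    exact this.congr_deriv (by rw [inner_sub_left]; ring)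
  have hφ'_nonpos : ∀ t ∈ interior (Ici (0 : ℝ)),
      ⟪gradient f (x + t • Δ) - gradient f x, Δ⟫ - L * t * ‖Δ‖ ^ 2 ≤ 0 := by
    intro t ht
    rw [interior_Ici] at ht
    rw [sub_nonpos]
    calc ⟪gradient f (x + t • Δ) - gradient f x, Δ⟫
        ≤ ‖gradient f (x + t • Δ) - gradient f x‖ * ‖Δ‖ := real_inner_le_norm _ _
      _ ≤ L * ‖x + t • Δ - x‖ * ‖Δ‖ := by gcongr; exact hlip _ _
      _ = L * t * ‖Δ‖ ^ 2 := by
        rw [add_sub_cancel_left, norm_smul, Real.norm_of_nonneg (le_of_lt ht)]; ring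
  have hanti : AntitoneOn φ (Ici 0) :=
    antitoneOn_of_hasDerivWithinAt_nonpos (convex_Ici 0)
      (fun t _ => (hφ' t).continuousAt.continuousWithinAt)
      (fun t _ => (hφ' t).hasDerivWithinAt) hφ'_nonpos
  have h01 : φ 1 ≤ φ 0 := hanti self_mem_Ici (mem_Ici.mpr zero_le_one) zero_le_one
  simp only [φ, one_smul, zero_smul, add_zero, add_sub_cancel, Δ] at h01
  linarith

end Smooth

theorem inner_sub_smul_le_of_pos {E : Type*} [NormedAddCommGroup E] [InnerProductSpace ℝ E]
    {η : ℝ} (hη : 0 < η) (g v ξ : E) :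
    ⟪g, ξ - η • v⟫ ≤ η * ‖g - v‖ ^ 2 + ‖ξ‖ ^ 2 / η - η / 2 * ‖g‖ ^ 2
      - ‖ξ - η • v‖ ^ 2 / (2 * η) := by
  have hexpand : ‖η • g + (ξ - η • v)‖ ^ 2
      = η ^ 2 * ‖g‖ ^ 2 + 2 * η * ⟪g, ξ - η • v⟫ + ‖ξ - η • v‖ ^ 2 := by
    rw [norm_add_sq_real, real_inner_smul_left, norm_smul, Real.norm_of_nonneg hη.le]; ring
  have hbound : ‖η • g + (ξ - η • v)‖ ^ 2 ≤ 2 * η ^ 2 * ‖g - v‖ ^ 2 + 2 * ‖ξ‖ ^ 2 := by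
    have hsum : η • g + (ξ - η • v) = η • (g - v) + ξ := by module
    rw [hsum]
    calc ‖η • (g - v) + ξ‖ ^ 2 ≤ (‖η • (g - v)‖ + ‖ξ‖) ^ 2 := by gcongr; exact norm_add_le _ _
      _ ≤ 2 * (‖η • (g - v)‖ ^ 2 + ‖ξ‖ ^ 2) := add_sq_le
      _ = 2 * η ^ 2 * ‖g - v‖ ^ 2 + 2 * ‖ξ‖ ^ 2 := by
        rw [norm_smul, Real.norm_of_nonneg hη.le]; ring
  have hrhs : η * ‖g - v‖ ^ 2 + ‖ξ‖ ^ 2 / η - η / 2 * ‖g‖ ^ 2 - ‖ξ - η • v‖ ^ 2 / (2 * η)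
      = (2 * η ^ 2 * ‖g - v‖ ^ 2 + 2 * ‖ξ‖ ^ 2 - η ^ 2 * ‖g‖ ^ 2 - ‖ξ - η • v‖ ^ 2) / (2 * η) := by
    field_simp
  rw [hrhs, le_div_iff₀ (by positivity)]
  linarith

theorem descent_lemma_PL_general {d : ℕ} (f : EuclideanSpace ℝ (Fin d) → ℝ)
    (L μ η r fstar : ℝ)
    (hdiff : Differentiable ℝ f)
    (hlip : ∀ x y, ‖gradient f x - gradient f y‖ ≤ L * ‖x - y‖)
    (hPL : ∀ x, 2 * μ * (f x - fstar) ≤ ‖gradient f x‖ ^ 2)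
    (hη : 0 < η) (x v ξ : EuclideanSpace ℝ (Fin d)) (hξ : ‖ξ‖ ≤ r)
    (x' : EuclideanSpace ℝ (Fin d)) (hx' : x' = x - η • v + ξ) :
    f x' - fstar ≤ (1 - η * μ) * (f x - fstar) + η * ‖gradient f x - v‖ ^ 2
      - (1 / (2 * η) - L / 2) * ‖x' - x‖ ^ 2 + r ^ 2 / η := by
  have hstep : x' - x = ξ - η • v := by rw [hx']; abel
  have hdescent := le_add_inner_gradient_add_sq hdiff hlip x x'
  have hinner := inner_sub_smul_le_of_pos hη (gradient f x) v ξ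
  have hnoise : ‖ξ‖ ^ 2 / η ≤ r ^ 2 / η := by gcongr
  have hPL' : η * μ * (f x - fstar) ≤ η / 2 * ‖gradient f x‖ ^ 2 := by
    nlinarith [hPL x]
  rw [hstep] at hdescent ⊢
  have hcoeff : ‖ξ - η • v‖ ^ 2 / (2 * η) = 1 / (2 * η) * ‖ξ - η • v‖ ^ 2 := by ring
  linarith

theorem descent_lemma_PL {d : ℕ} (f : EuclideanSpace ℝ (Fin d) → ℝ)
    (L μ η r fstar : ℝ)
    (hdiff : Differentiable ℝ f)
    (hlip : ∀ x y, ‖gradient f x - gradient f y‖ ≤ L * ‖x - y‖)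
    (hμ : 0 < μ)
    (hfstar : ∀ x, fstar ≤ f x)
    (hPL : ∀ x, 2 * μ * (f x - fstar) ≤ ‖gradient f x‖ ^ 2)
    (hη : 0 < η) (x v ξ : EuclideanSpace ℝ (Fin d)) (hξ : ‖ξ‖ ≤ r)
    (x' : EuclideanSpace ℝ (Fin d)) (hx' : x' = x - η • v + ξ) :
    f x' - fstar ≤ (1 - η * μ) * (f x - fstar) + η * ‖gradient f x - v‖ ^ 2
      - (1 / (2 * η) - L / 2) * ‖x' - x‖ ^ 2 + r ^ 2 / η :=
  descent_lemma_PL_general f L μ η r fstar hdiff hlip hPL hη x v ξ hξ x' hx'
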